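/- arXiv:2206.12488 — 3 statements merged into one kernel-verified Lean document; each statement's English description precedes it below -/
import Mathlib

section
/- Let ξ, η : ℝ^d → ℂ be Lebesgue measurable functions with |ξ(t)| = |η(t)| = 1 for a.e. t. Suppose there exist functions μ : ℝ^d → ℝ^d and ν : ℝ^d → ℝ such that for a.e. ω ∈ ℝ^d, the identity ξ(t + ω/2) η(t − ω/2) = exp(i μ(ω)·t + i ν(ω)) holds for a.e. t ∈ ℝ^d. Then there exist a real symmetric d×d matrix A, vectors ξ̄, η̄ ∈ ℝ^d, and reals γ, δ such that ξ(t) = exp(i t·At + i ξ̄·t + iγ) and η(t) = exp(−i t·At + i η̄·t + iδ) for a.e. t. -/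
open MeasureTheory
open scoped RealInnerProductSpace

namespace QCauchy

noncomputable section

/-! ### Elementary lemmas about `expI` -/

/-- `expI x = exp (I x)` for real `x`. -/
def expI (x : ℝ) : ℂ := Complex.exp (Complex.I * (x : ℂ))

lemma expI_ne_zero (x : ℝ) : expI x ≠ 0 := Complex.exp_ne_zero _

lemma abs_expI (x : ℝ) : ‖expI x‖ = 1 := by
  rw [expI, mul_comm]; exact Complex.norm_exp_ofReal_mul_I x

lemma expI_add (x y : ℝ) : expI (x + y) = expI x * expI y := by
  rw [expI, expI, expI, ← Complex.exp_add]; congr 1; push_cast; ring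

lemma expI_zero : expI 0 = 1 := by simp [expI]

lemma conj_expI (x : ℝ) : (starRingEnd ℂ) (expI x) = expI (-x) := by
  rw [expI, ← Complex.exp_conj]
  congr 1
  rw [map_mul, Complex.conj_I, Complex.conj_ofReal]
  push_cast
  ring

lemma expI_mul_expI_neg (x : ℝ) : expI x * expI (-x) = 1 := by
  rw [← expI_add]; simp [expI_zero]

lemma expI_eq_iff_sub {a b : ℝ} : expI a = expI b ↔ expI (a - b) = 1 := by
  constructor
  · intro h
    have : expI (a - b) * expI b = expI b := by
      rw [← expI_add, sub_add_cancel, h]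
    exact mul_right_cancel₀ (expI_ne_zero b) (by rw [this, one_mul])
  · intro h
    have : expI (a - b) * expI b = expI b := by rw [h, one_mul]
    rw [← expI_add, sub_add_cancel] at this
    exact this

lemma expI_eq_one_iff {x : ℝ} : expI x = 1 ↔ ∃ n : ℤ, x = n * (2 * Real.pi) := by
  rw [expI, Complex.exp_eq_one_iff]
  constructor
  · rintro ⟨n, hn⟩
    refine ⟨n, ?_⟩
    have h2 : (Complex.I : ℂ) * x = Complex.I * ((n : ℂ) * (2 * Real.pi)) := by
      rw [hn]; ring
    have h3 : (x : ℂ) = ((n : ℝ) * (2 * Real.pi) : ℝ) := by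
      have := mul_left_cancel₀ Complex.I_ne_zero h2
      rw [this]; push_cast; ring
    exact_mod_cast Complex.ofReal_inj.mp h3
  · rintro ⟨n, hn⟩
    exact ⟨n, by rw [hn]; push_cast; ring⟩

lemma expI_sum {α : Type*} (s : Finset α) (f : α → ℝ) :
    expI (∑ i ∈ s, f i) = ∏ i ∈ s, expI (f i) := by
  rw [expI, show (∏ i ∈ s, expI (f i)) = Complex.exp (∑ i ∈ s, Complex.I * (f i : ℂ)) from
    (Complex.exp_sum s fun i => Complex.I * (f i : ℂ)).symm]
  congr 1
  push_cast
  rw [Finset.mul_sum]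

/-- if `s*c` is a multiple of `2π` for all `s`, then `c = 0`. -/
lemma eq_zero_of_forall_mul_expI {c : ℝ} (h : ∀ s : ℝ, expI (s * c) = 1) : c = 0 := by
  by_contra hc
  obtain ⟨n, hn⟩ := expI_eq_one_iff.mp (h (Real.pi / c))
  rw [div_mul_cancel₀ _ hc] at hn
  have hπ := Real.pi_ne_zero
  have h2 : ((2 * (n : ℝ) - 1)) * Real.pi = 0 := by linear_combination -hn
  rcases mul_eq_zero.mp h2 with h3 | h3
  · have h4 : ((2 * n : ℤ) : ℝ) = 1 := by push_cast; linarith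
    have h5 : (2 * n : ℤ) = 1 := by exact_mod_cast h4
    omega
  · exact hπ h3

/-- an additive function taking values in `2πℤ` vanishes. -/
lemma additive_discrete_eq_zero {g : ℝ → ℝ} (hadd : ∀ x y, g (x + y) = g x + g y)
    (hdisc : ∀ s, ∃ n : ℤ, g s = n * (2 * Real.pi)) : ∀ s, g s = 0 := by
  intro s
  by_contra hs
  have hhalf : ∀ x : ℝ, g x = 2 * g (x / 2) := by
    intro x
    have h := hadd (x / 2) (x / 2)
    rw [add_halves] at h
    rw [h]; ring
  have hpow : ∀ n : ℕ, g s = 2 ^ n * g (s / 2 ^ n) := by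
    intro n
    induction n with
    | zero => simp
    | succ k ih =>
      rw [ih, hhalf (s / 2 ^ k), div_div]
      rw [pow_succ]
      ring_nf
  obtain ⟨n, hn⟩ := pow_unbounded_of_one_lt (R := ℝ) (|g s| / (2 * Real.pi)) one_lt_two
  obtain ⟨k, hk⟩ := hdisc (s / 2 ^ n)
  have hgs : g s = 2 ^ n * ((k : ℝ) * (2 * Real.pi)) := by rw [← hk, ← hpow]
  have hk0 : k ≠ 0 := by
    intro h0
    rw [h0] at hgs
    simp at hgs
    exact hs hgs
  have h1 : (1 : ℝ) ≤ |(k : ℝ)| := by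
    have := Int.one_le_abs hk0
    exact_mod_cast this
  have hpi : (0:ℝ) < 2 * Real.pi := by positivity
  have habs : |g s| = 2 ^ n * (|(k : ℝ)| * (2 * Real.pi)) := by
    rw [hgs, abs_mul, abs_mul, abs_of_nonneg (by positivity : (0:ℝ) ≤ (2:ℝ)^n),
      abs_of_nonneg hpi.le]
  have hlt : |g s| < 2 ^ n * (2 * Real.pi) := by
    rw [div_lt_iff₀ hpi] at hn
    linarith [hn]
  have hge : 2 ^ n * (2 * Real.pi) ≤ |g s| := by
    rw [habs]
    have : (2:ℝ) ^ n * (2 * Real.pi) ≤ 2 ^ n * (|(k:ℝ)| * (2 * Real.pi)) := by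
      apply mul_le_mul_of_nonneg_left _ (by positivity)
      nlinarith
    exact this
  linarith

/-- Classification of measurable unimodular characters of `ℝ`. -/
lemma oneD {φ : ℝ → ℂ} (hmeas : Measurable φ) (habs : ∀ x, ‖φ x‖ = 1)
    (hhom : ∀ x y, φ (x + y) = φ x * φ y) :
    ∃ c : ℝ, ∀ s, φ s = expI (c * s) := by
  have hne : ∀ x, φ x ≠ 0 := by
    intro x hx
    have := habs x
    rw [hx] at this
    simp at this
  have hφ0 : φ 0 = 1 := by
    have h := hhom 0 0
    rw [add_zero] at h
    have := mul_right_cancel₀ (hne 0) (by rw [← h, one_mul] : (1 : ℂ) * φ 0 = φ 0 * φ 0)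
    exact this.symm
  -- interval integrability
  have hint : ∀ a b : ℝ, IntervalIntegrable φ volume a b := by
    intro a b
    rw [intervalIntegrable_iff]
    apply Measure.integrableOn_of_bounded (M := 1)
    · exact (measure_Ioc_lt_top).ne
    · exact hmeas.aestronglyMeasurable
    · refine Filter.Eventually.of_forall fun x => ?_
      rw [habs x]
  set Prim : ℝ → ℂ := fun t => ∫ x in (0:ℝ)..t, φ x with hPrim
  have hPrimCont : Continuous Prim := intervalIntegral.continuous_primitive hint 0
  have key : ∀ t r : ℝ, φ t * Prim r = Prim (t + r) - Prim t := by
    intro t r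
    have h1 : ∫ s in (0:ℝ)..r, φ (t + s) = φ t * Prim r := by
      rw [show (fun s => φ (t + s)) = fun s => φ t * φ s from funext fun s => hhom t s]
      exact intervalIntegral.integral_const_mul _ _
    have h2 : ∫ s in (0:ℝ)..r, φ (t + s) = ∫ x in t..(t+r), φ x := by
      rw [intervalIntegral.integral_comp_add_left (fun x => φ x) t, add_zero]
    have h3 : Prim (t + r) - Prim t = ∫ x in t..(t+r), φ x :=
      intervalIntegral.integral_interval_sub_left (hint 0 (t+r)) (hint 0 t)
    rw [← h1, h2, h3]
  -- some r with Prim r ≠ 0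
  have hr : ∃ r : ℝ, Prim r ≠ 0 := by
    by_contra hP
    push_neg at hP
    have hab : ∀ a b : ℝ, ∫ x in a..b, φ x = 0 := by
      intro a b
      have := intervalIntegral.integral_interval_sub_left (hint 0 b) (hint 0 a)
      rw [show (∫ x in (0:ℝ)..b, φ x) = Prim b from rfl,
        show (∫ x in (0:ℝ)..a, φ x) = Prim a from rfl, hP a, hP b] at this
      rw [← this, sub_zero]
    have hloc : LocallyIntegrable φ (volume : Measure ℝ) := by
      intro x
      refine ⟨Set.Icc (x - 1) (x + 1), Icc_mem_nhds (by linarith) (by linarith), ?_⟩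
      apply Measure.integrableOn_of_bounded (M := 1)
      · exact (measure_Icc_lt_top).ne
      · exact hmeas.aestronglyMeasurable
      · exact Filter.Eventually.of_forall fun x => by rw [habs x]
    have hae := IsUnifLocDoublingMeasure.ae_tendsto_average (volume : Measure ℝ) hloc 1
    haveI : (ae (volume : Measure ℝ)).NeBot := ae_neBot.mpr (by
      intro h0
      have := Metric.measure_ball_pos (volume : Measure ℝ) 0 one_pos
      rw [h0] at this; simp at this)
    obtain ⟨x, hx⟩ := hae.exists
    have htend := hx (fun _ : ℕ => x) (fun j : ℕ => 1 / (j + 1))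
      (by
        rw [tendsto_nhdsWithin_iff]
        exact ⟨tendsto_one_div_add_atTop_nhds_zero_nat,
          Filter.Eventually.of_forall fun j => Set.mem_Ioi.mpr (by positivity)⟩)
      (Filter.Eventually.of_forall fun j => by
        simp only [one_mul]
        exact Metric.mem_closedBall_self (by positivity))
    have hzero : ∀ j : ℕ, (⨍ y in Metric.closedBall x (1 / (j + 1)), φ y) = 0 := by
      intro j
      rw [setAverage_eq, Real.closedBall_eq_Icc, integral_Icc_eq_integral_Ioc,
        ← intervalIntegral.integral_of_le (by linarith [show (0:ℝ) < 1/((j:ℝ)+1) by positivity]),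
        hab]
      simp
    rw [show (fun j : ℕ => ⨍ y in Metric.closedBall ((fun _ => x) j) ((fun j : ℕ => 1 / ((j:ℝ) + 1)) j), φ y) = fun _ => (0:ℂ) from funext hzero] at htend
    have : φ x = 0 := tendsto_nhds_unique htend tendsto_const_nhds
    exact hne x this
  obtain ⟨r, hr⟩ := hr
  -- continuity of φ
  have hφeq : ∀ t, φ t = (Prim (t + r) - Prim t) * (Prim r)⁻¹ := by
    intro t
    rw [← key]
    field_simp
  have hφcont : Continuous φ := by
    apply Continuous.congr (f := fun t => (Prim (t + r) - Prim t) * (Prim r)⁻¹)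
    · exact (((hPrimCont.comp (continuous_id.add continuous_const)).sub hPrimCont).mul
        continuous_const)
    · exact fun t => (hφeq t).symm
  -- FTC
  have hderiv : ∀ t : ℝ, HasDerivAt Prim (φ t) t := fun t =>
    intervalIntegral.integral_hasDerivAt_right (hint 0 t)
      (hφcont.stronglyMeasurableAtFilter volume (nhds t)) hφcont.continuousAt
  have hφd : ∀ t : ℝ, HasDerivAt φ ((φ (t + r) - φ t) * (Prim r)⁻¹) t := by
    intro t
    have h1 : HasDerivAt (fun t => Prim (t + r)) (φ (t + r)) t := by
      simpa using HasDerivAt.comp_add_const t r (hderiv (t + r))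
    have h2 := ((h1.sub (hderiv t)).mul_const (Prim r)⁻¹)
    exact h2.congr_of_eventuallyEq (Filter.Eventually.of_forall fun u => hφeq u)
  -- derivative is multiple
  set D : ℝ → ℂ := fun t => (φ (t + r) - φ t) * (Prim r)⁻¹ with hD
  have hmul : ∀ t : ℝ, D t = φ t * D 0 := by
    intro t
    have lhs : HasDerivAt (fun s => φ (t + s)) (D t) 0 := by
      simpa using HasDerivAt.comp_const_add t 0 (by simpa using hφd t)
    have rhs : HasDerivAt (fun s => φ t * φ s) (φ t * D 0) 0 := (hφd 0).const_mul (φ t)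
    have : (fun s => φ (t + s)) = fun s => φ t * φ s := funext fun s => hhom t s
    rw [this] at lhs
    exact lhs.unique rhs
  set δ : ℂ := D 0 with hδ
  -- φ t = exp (δ t)
  have hexp : ∀ t : ℝ, φ t = Complex.exp (δ * t) := by
    have hg : ∀ t : ℝ, HasDerivAt (fun t : ℝ => φ t * Complex.exp (-δ * t)) 0 t := by
      intro t
      have he : HasDerivAt (fun t : ℝ => Complex.exp (-δ * t)) (-δ * Complex.exp (-δ * t)) t := by
        have h0 : HasDerivAt (fun t : ℝ => (-δ) * (t:ℂ)) (-δ) t := by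
          simpa using (Complex.ofRealCLM.hasDerivAt (x := t)).const_mul (-δ)
        exact h0.cexp.congr_deriv (by ring)
      have := ((hφd t).mul he)
      have heq : (φ (t + r) - φ t) * (Prim r)⁻¹ * Complex.exp (-δ * t) + φ t * (-δ * Complex.exp (-δ * t)) = 0 := by
        have h3 : (φ (t + r) - φ t) * (Prim r)⁻¹ = φ t * δ := hmul t
        rw [h3]; ring
      rwa [heq] at this
    have hconst : ∀ t : ℝ, φ t * Complex.exp (-δ * t) = 1 := by
      intro t
      have := is_const_of_deriv_eq_zero (𝕜 := ℝ)
        (f := fun t : ℝ => φ t * Complex.exp (-δ * t))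
        (fun x => (hg x).differentiableAt) (fun x => (hg x).deriv) t 0
      rw [this]
      simp [hφ0]
    intro t
    have h1 := hconst t
    rw [show -δ * (t:ℂ) = -(δ * (t:ℂ)) by ring, Complex.exp_neg, ← div_eq_mul_inv,
      div_eq_one_iff_eq (Complex.exp_ne_zero _)] at h1
    exact h1
  -- δ purely imaginary
  have hre : δ.re = 0 := by
    have h1 := habs 1
    rw [hexp 1, Complex.norm_exp] at h1
    simp only [Complex.ofReal_one, mul_one] at h1
    exact (Real.exp_eq_one_iff _).mp h1
  obtain ⟨c, hc⟩ : ∃ c : ℝ, δ = Complex.I * c := by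
    refine ⟨δ.im, ?_⟩
    nth_rewrite 1 [← Complex.re_add_im δ]
    rw [hre]
    push_cast
    ring
  refine ⟨c, fun s => ?_⟩
  rw [hexp s, hc, expI]
  congr 1
  push_cast
  ring


variable {d : ℕ}

section Euclidean

local notation "𝔾" => EuclideanSpace ℝ (Fin d)

lemma ae_shift {P : 𝔾 → Prop} (c : 𝔾) (h : ∀ᵐ t : 𝔾, P t) : ∀ᵐ t : 𝔾, P (t + c) :=
  (measurePreserving_add_right (volume : Measure 𝔾) c).quasiMeasurePreserving.ae h

lemma volume_ne_zero : (volume : Measure 𝔾) ≠ 0 := by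
  intro h0
  have := Metric.measure_ball_pos (volume : Measure 𝔾) 0 one_pos
  rw [h0] at this
  simp at this

lemma ae_exists {P : 𝔾 → Prop} (h : ∀ᵐ t : 𝔾, P t) : ∃ t, P t := by
  haveI : (ae (volume : Measure 𝔾)).NeBot := ae_neBot.mpr volume_ne_zero
  exact h.exists

/-- Uniqueness of a.e. linear phases. -/
lemma unique_char {p p' : 𝔾} {q q' : ℝ}
    (h : ∀ᵐ u : 𝔾, expI (⟪p, u⟫ + q) = expI (⟪p', u⟫ + q')) :
    p = p' ∧ expI q = expI q' := by
  have key : ∀ v : 𝔾, expI ⟪p - p', v⟫ = 1 := by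
    intro v
    obtain ⟨u, h1, h2⟩ := ae_exists (h.and (ae_shift v h))
    rw [inner_add_right, inner_add_right] at h2
    have e1 := expI_eq_iff_sub.mp h1
    have e2 := expI_eq_iff_sub.mp h2
    have : expI (⟪p, u⟫ + ⟪p, v⟫ + q - (⟪p', u⟫ + ⟪p', v⟫ + q'))
        = expI (⟪p, v⟫ - ⟪p', v⟫) * expI (⟪p, u⟫ + q - (⟪p', u⟫ + q')) := by
      rw [← expI_add]; congr 1; ring
    rw [this, e1, mul_one] at e2
    rw [inner_sub_left]
    exact e2
  have hp : p = p' := by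
    have hw : ⟪p - p', p - p'⟫ = (0 : ℝ) := by
      apply eq_zero_of_forall_mul_expI
      intro s
      have := key (s • (p - p'))
      rwa [real_inner_smul_right] at this
    have := inner_self_eq_zero (𝕜 := ℝ) (x := p - p').mp hw
    rwa [sub_eq_zero] at this
  refine ⟨hp, ?_⟩
  subst hp
  obtain ⟨u, hu⟩ := ae_exists h
  have := expI_eq_iff_sub.mp hu
  have h2 : (⟪p, u⟫ + q - (⟪p, u⟫ + q')) = q - q' := by ring
  rw [h2] at this
  exact expI_eq_iff_sub.mpr this

end Euclidean

section Main

variable (d : ℕ)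

local notation "𝔾" => EuclideanSpace ℝ (Fin d)

open ComplexConjugate

set_option maxHeartbeats 1000000 in
theorem main (ξ η : 𝔾 → ℂ)
    (hξmeas : Measurable ξ) (hηmeas : Measurable η)
    (hξ1 : ∀ᵐ t : 𝔾, ‖ξ t‖ = 1)
    (hη1 : ∀ᵐ t : 𝔾, ‖η t‖ = 1)
    (μ : 𝔾 → 𝔾) (ν : 𝔾 → ℝ)
    (hfe : ∀ᵐ ω : 𝔾, ∀ᵐ t : 𝔾,
      ξ (t + (2 : ℝ)⁻¹ • ω) * η (t - (2 : ℝ)⁻¹ • ω) =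
        Complex.exp (Complex.I * ((⟪μ ω, t⟫ + ν ω : ℝ) : ℂ))) :
    ∃ (A : Matrix (Fin d) (Fin d) ℝ), A.IsSymm ∧
      ∃ (ξbar ηbar : 𝔾) (γ δ : ℝ),
        (∀ᵐ t : 𝔾,
          ξ t = Complex.exp (Complex.I *
            (((∑ i, ∑ j, A i j * t i * t j) + ⟪ξbar, t⟫ + γ : ℝ) : ℂ))) ∧
        (∀ᵐ t : 𝔾,
          η t = Complex.exp (Complex.I *
            ((-(∑ i, ∑ j, A i j * t i * t j) + ⟪ηbar, t⟫ + δ : ℝ) : ℂ))) := by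
  have hfe' : ∀ᵐ ω : 𝔾, ∀ᵐ t : 𝔾,
      ξ (t + (2 : ℝ)⁻¹ • ω) * η (t - (2 : ℝ)⁻¹ • ω) = expI (⟪μ ω, t⟫ + ν ω) := hfe
  -- ## Step 1 : for every `a` there are `p, q` with
  -- `ξ(u+a) conj ξ(u) = expI (⟪p,u⟫ + q)` for a.e. `u`.
  have hstep1 : ∀ a : 𝔾, ∃ (p : 𝔾) (q : ℝ), ∀ᵐ u : 𝔾,
      ξ (u + a) * conj (ξ u) = expI (⟪p, u⟫ + q) := by
    intro a
    obtain ⟨ω, hω, hω'⟩ := ae_exists (hfe'.and (ae_shift a hfe'))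
    have hω2 := ae_shift ((2:ℝ)⁻¹ • a) hω'
    have hη' : ∀ᵐ t : 𝔾, ‖η (t - (2:ℝ)⁻¹ • ω)‖ = 1 := by
      have := ae_shift (-((2:ℝ)⁻¹ • ω)) hη1
      filter_upwards [this] with t ht
      rwa [sub_eq_add_neg]
    refine ⟨μ (ω + a) - μ ω,
      ⟪μ (ω + a), (2:ℝ)⁻¹ • a⟫ + ν (ω + a) - ν ω - ⟪μ (ω + a) - μ ω, (2:ℝ)⁻¹ • ω⟫, ?_⟩
    set p : 𝔾 := μ (ω + a) - μ ω with hp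
    set q : ℝ := ⟪μ (ω + a), (2:ℝ)⁻¹ • a⟫ + ν (ω + a) - ν ω - ⟪p, (2:ℝ)⁻¹ • ω⟫ with hq
    have hcomb : ∀ᵐ t : 𝔾, ξ ((t + (2:ℝ)⁻¹ • ω) + a) * conj (ξ (t + (2:ℝ)⁻¹ • ω))
        = expI (⟪p, t + (2:ℝ)⁻¹ • ω⟫ + q) := by
      filter_upwards [hω, hω2, hη'] with t h1 h2 h3
      rw [show t + (2:ℝ)⁻¹ • a + (2:ℝ)⁻¹ • (ω + a) = (t + (2:ℝ)⁻¹ • ω) + a by module,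
          show t + (2:ℝ)⁻¹ • a - (2:ℝ)⁻¹ • (ω + a) = t - (2:ℝ)⁻¹ • ω by module] at h2
      have hY : η (t - (2:ℝ)⁻¹ • ω) * conj (η (t - (2:ℝ)⁻¹ • ω)) = 1 := by
        rw [Complex.mul_conj, Complex.normSq_eq_norm_sq, h3]
        norm_num
      have key : (ξ ((t + (2:ℝ)⁻¹ • ω) + a) * η (t - (2:ℝ)⁻¹ • ω))
          * conj (ξ (t + (2:ℝ)⁻¹ • ω) * η (t - (2:ℝ)⁻¹ • ω))
          = ξ ((t + (2:ℝ)⁻¹ • ω) + a) * conj (ξ (t + (2:ℝ)⁻¹ • ω)) := by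
        rw [map_mul]
        have h4 : ξ ((t + (2:ℝ)⁻¹ • ω) + a) * η (t - (2:ℝ)⁻¹ • ω)
            * (conj (ξ (t + (2:ℝ)⁻¹ • ω)) * conj (η (t - (2:ℝ)⁻¹ • ω)))
            = ξ ((t + (2:ℝ)⁻¹ • ω) + a) * conj (ξ (t + (2:ℝ)⁻¹ • ω))
              * (η (t - (2:ℝ)⁻¹ • ω) * conj (η (t - (2:ℝ)⁻¹ • ω))) := by ring
        rw [h4, hY, mul_one]
      rw [← key, h1, h2, conj_expI, ← expI_add]
      congr 1
      rw [hq, hp]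
      simp only [inner_add_right, inner_sub_left]
      ring
    have hshift := ae_shift (-((2:ℝ)⁻¹ • ω)) hcomb
    filter_upwards [hshift] with u hu
    rwa [neg_add_cancel_right] at hu
  choose P Q hPQ using hstep1
  -- ## Step 2 : additivity
  have hPQadd : ∀ a b : 𝔾, P (a + b) = P a + P b ∧
      expI (Q (a + b)) = expI (Q a + ⟪P a, b⟫ + Q b) := by
    intro a b
    apply unique_char
    have hs1 := ae_shift b (hPQ a)
    have hs2 := hPQ b
    have hs3 := hPQ (a + b)
    have hξb : ∀ᵐ u : 𝔾, ‖ξ (u + b)‖ = 1 := ae_shift b hξ1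
    filter_upwards [hs1, hs2, hs3, hξb] with u h1 h2 h3 h4
    have hYY : ξ (u + b) * conj (ξ (u + b)) = 1 := by
      rw [Complex.mul_conj, Complex.normSq_eq_norm_sq, h4]; norm_num
    have hcomp : ξ (u + (a + b)) * conj (ξ u)
        = expI (⟪P a, u + b⟫ + Q a) * expI (⟪P b, u⟫ + Q b) := by
      rw [← h1, ← h2]
      rw [show u + (a + b) = u + b + a by module]
      rw [show (ξ (u + b + a) * conj (ξ (u + b))) * (ξ (u + b) * conj (ξ u))
          = ξ (u + b + a) * conj (ξ u) * (ξ (u + b) * conj (ξ (u + b))) from by ring,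
        hYY, mul_one]
    rw [← h3, hcomp, ← expI_add]
    congr 1
    simp only [inner_add_right, inner_add_left]
    ring
  have hPadd : ∀ a b : 𝔾, P (a + b) = P a + P b := fun a b => (hPQadd a b).1
  -- ## Step 3 : integral representation and measurability
  have hBmeas : MeasurableSet (Metric.ball (0:𝔾) 1) := measurableSet_ball
  set B : Set 𝔾 := Metric.ball 0 1 with hB
  set vB : ℝ := (volume B).toReal with hvB
  have hvBpos : 0 < vB := by
    rw [hvB]
    exact ENNReal.toReal_pos (Metric.measure_ball_pos volume 0 one_pos).ne'
      measure_ball_lt_top.ne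
  have hvBC : (vB : ℂ) ≠ 0 := by exact_mod_cast hvBpos.ne'
  have hconjmeas : Measurable fun z : ℂ => conj z := Complex.continuous_conj.measurable
  have hFid : ∀ a t : 𝔾,
      (∫ u in B, ξ (u + t + a) * conj (ξ (u + a)) * (conj (ξ (u + t)) * ξ u))
        = (vB : ℂ) * expI ⟪P a, t⟫ := by
    intro a t
    have h2 := ae_shift t (hPQ a)
    have hae : ∀ᵐ u : 𝔾,
        ξ (u + t + a) * conj (ξ (u + a)) * (conj (ξ (u + t)) * ξ u) = expI ⟪P a, t⟫ := by
      filter_upwards [hPQ a, h2] with u e1 e2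
      have hconj : conj (ξ (u + a) * conj (ξ u)) = conj (ξ (u + a)) * ξ u := by
        rw [map_mul, Complex.conj_conj]
      calc ξ (u+t+a) * conj (ξ (u+a)) * (conj (ξ (u+t)) * ξ u)
          = (ξ (u+t+a) * conj (ξ (u+t))) * conj (ξ (u+a) * conj (ξ u)) := by
            rw [hconj]; ring
        _ = expI (⟪P a, u + t⟫ + Q a) * expI (-(⟪P a, u⟫ + Q a)) := by
            rw [e2, e1, conj_expI]
        _ = expI ⟪P a, t⟫ := by
            rw [← expI_add]; congr 1; rw [inner_add_right]; ring
    rw [setIntegral_congr_ae hBmeas (hae.mono fun u hu _ => hu), setIntegral_const,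
      measureReal_def, ← hvB, Complex.real_smul]
  have hFmeas : ∀ t : 𝔾, Measurable fun a : 𝔾 =>
      ∫ u in B, ξ (u + t + a) * conj (ξ (u + a)) * (conj (ξ (u + t)) * ξ u) := by
    intro t
    have hjoint : StronglyMeasurable fun p : 𝔾 × 𝔾 =>
        ξ (p.2 + t + p.1) * conj (ξ (p.2 + p.1)) * (conj (ξ (p.2 + t)) * ξ p.2) := by
      apply Measurable.stronglyMeasurable
      have m1 : Measurable fun p : 𝔾 × 𝔾 => ξ (p.2 + t + p.1) :=
        hξmeas.comp ((measurable_snd.add_const t).add measurable_fst)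
      have m2 : Measurable fun p : 𝔾 × 𝔾 => conj (ξ (p.2 + p.1)) :=
        hconjmeas.comp (hξmeas.comp (measurable_snd.add measurable_fst))
      have m3 : Measurable fun p : 𝔾 × 𝔾 => conj (ξ (p.2 + t)) :=
        hconjmeas.comp (hξmeas.comp (measurable_snd.add_const t))
      have m4 : Measurable fun p : 𝔾 × 𝔾 => ξ p.2 := hξmeas.comp measurable_snd
      exact (m1.mul m2).mul (m3.mul m4)
    exact hjoint.integral_prod_right'.measurable
  -- ## Step 4 : linearity of P
  have hPhom : ∀ (a t : 𝔾) (s : ℝ), ⟪P (s • a), t⟫ = s * ⟪P a, t⟫ := by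
    intro a t
    have hφm : Measurable fun s : ℝ => expI ⟪P (s • a), t⟫ := by
      have heq : (fun s : ℝ => expI ⟪P (s • a), t⟫)
          = fun s : ℝ => (∫ u in B, ξ (u + t + s • a) * conj (ξ (u + s • a))
              * (conj (ξ (u + t)) * ξ u)) * (vB : ℂ)⁻¹ := by
        funext s
        rw [hFid (s • a) t]
        field_simp
      rw [heq]
      have hsm : Measurable fun s : ℝ => s • a :=
        (continuous_id.smul continuous_const).measurable
      exact ((hFmeas t).comp hsm).mul_const _
    have hφabs : ∀ s : ℝ, ‖expI ⟪P (s • a), t⟫‖ = 1 := fun s => abs_expI _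
    have hφhom : ∀ x y : ℝ,
        expI ⟪P ((x + y) • a), t⟫ = expI ⟪P (x • a), t⟫ * expI ⟪P (y • a), t⟫ := by
      intro x y
      rw [add_smul, hPadd, inner_add_left, expI_add]
    obtain ⟨c, hc⟩ := oneD hφm hφabs hφhom
    have hg0 : ∀ s : ℝ, ⟪P (s • a), t⟫ - c * s = 0 := by
      apply additive_discrete_eq_zero
      · intro x y
        rw [add_smul, hPadd, inner_add_left]; ring
      · intro s
        have h2 := expI_eq_iff_sub.mp (hc s)
        exact expI_eq_one_iff.mp h2
    have hc1 : c = ⟪P a, t⟫ := by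
      have := hg0 1
      rw [one_smul] at this
      linarith
    intro s
    have := hg0 s
    rw [hc1] at this
    linarith
  have hPsmul : ∀ (s : ℝ) (a : 𝔾), P (s • a) = s • P a := by
    intro s a
    apply ext_inner_right ℝ
    intro v
    rw [hPhom a v s, real_inner_smul_left]
  -- ## Step 5 : symmetry
  have hsym : ∀ a b : 𝔾, ⟪P a, b⟫ = ⟪P b, a⟫ := by
    have hsym_e : ∀ a b : 𝔾, expI (⟪P a, b⟫ - ⟪P b, a⟫) = 1 := by
      intro a b
      have h1 := (hPQadd a b).2
      have h2 := (hPQadd b a).2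
      rw [add_comm b a] at h2
      have h3 : expI (Q a + ⟪P a, b⟫ + Q b) = expI (Q b + ⟪P b, a⟫ + Q a) :=
        h1.symm.trans h2
      have h4 := expI_eq_iff_sub.mp h3
      rwa [show Q a + ⟪P a, b⟫ + Q b - (Q b + ⟪P b, a⟫ + Q a)
        = ⟪P a, b⟫ - ⟪P b, a⟫ from by ring] at h4
    intro a b
    have hz : ⟪P a, b⟫ - ⟪P b, a⟫ = 0 := by
      apply eq_zero_of_forall_mul_expI
      intro s
      have h3 := hsym_e (s • a) b
      rw [hPhom a b s] at h3
      rw [real_inner_smul_right] at h3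
      rwa [show s * ⟪P a, b⟫ - s * ⟪P b, a⟫ = s * (⟪P a, b⟫ - ⟪P b, a⟫) from by ring] at h3
    linarith
  -- ## Step 6 : the matrix A and the quadratic form
  have hdecomp : ∀ x : 𝔾, ∑ i, x i • (EuclideanSpace.single i (1:ℝ) : 𝔾) = x := by
    intro x
    have h := (EuclideanSpace.basisFun (Fin d) ℝ).sum_repr x
    simpa [EuclideanSpace.basisFun_apply, EuclideanSpace.basisFun_repr] using h
  have hinner_single : ∀ (x : 𝔾) (j : Fin d),
      ⟪x, (EuclideanSpace.single j (1:ℝ) : 𝔾)⟫ = x j := by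
    intro x j
    rw [EuclideanSpace.inner_single_right]
    simp
  set A : Matrix (Fin d) (Fin d) ℝ := fun i j =>
    ⟪P (EuclideanSpace.single i (1:ℝ)), (EuclideanSpace.single j (1:ℝ) : 𝔾)⟫ / 2 with hA
  have hAval : ∀ i j, 2 * A i j
      = ⟪P (EuclideanSpace.single i (1:ℝ)), (EuclideanSpace.single j (1:ℝ) : 𝔾)⟫ := by
    intro i j
    simp only [hA]
    ring
  have hAsymm : ∀ i j, A j i = A i j := by
    intro i j
    simp only [hA]
    rw [hsym]
  have hAIsSymm : A.IsSymm := by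
    apply Matrix.ext
    intro i j
    rw [Matrix.transpose_apply]
    exact hAsymm i j
  have hPa_basis : ∀ a : 𝔾, P a = ∑ i, a i • P (EuclideanSpace.single i (1:ℝ)) := by
    intro a
    conv_lhs => rw [← hdecomp a]
    have hms : P (∑ i, a i • (EuclideanSpace.single i (1:ℝ) : 𝔾))
        = ∑ i, P (a i • (EuclideanSpace.single i (1:ℝ) : 𝔾)) :=
      map_sum (AddMonoidHom.mk' P hPadd) _ _
    rw [hms]
    exact Finset.sum_congr rfl fun i _ => hPsmul _ _
  have hPinner : ∀ a u : 𝔾, ⟪P a, u⟫ = 2 * ∑ i, ∑ j, A i j * a i * u j := by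
    intro a u
    have hxu : ∀ x : 𝔾, ⟪x, u⟫
        = ∑ j, u j * ⟪x, (EuclideanSpace.single j (1:ℝ) : 𝔾)⟫ := by
      intro x
      conv_lhs => rw [← hdecomp u]
      rw [inner_sum]
      exact Finset.sum_congr rfl fun j _ => real_inner_smul_right _ _ _
    rw [hPa_basis a, sum_inner, Finset.mul_sum]
    refine Finset.sum_congr rfl fun i _ => ?_
    rw [real_inner_smul_left, hxu (P (EuclideanSpace.single i (1:ℝ))), Finset.mul_sum,
      Finset.mul_sum]
    refine Finset.sum_congr rfl fun j _ => ?_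
    rw [← hAval i j]
    ring
  have hQuadadd : ∀ u a : 𝔾, (∑ i, ∑ j, A i j * (u + a) i * (u + a) j)
      = (∑ i, ∑ j, A i j * u i * u j) + ⟪P a, u⟫ + (∑ i, ∑ j, A i j * a i * a j) := by
    intro u a
    have happ : ∀ (x y : 𝔾) (i : Fin d), (x + y) i = x i + y i := fun x y i => rfl
    have hterm : ∀ i j : Fin d, A i j * (u + a) i * (u + a) j
        = A i j * u i * u j + A i j * u i * a j + A i j * a i * u j
          + A i j * a i * a j := by
      intro i j
      rw [happ, happ]
      ring
    have hcross : (∑ i, ∑ j, A i j * u i * a j) = ∑ i, ∑ j, A i j * a i * u j := by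
      rw [Finset.sum_comm]
      refine Finset.sum_congr rfl fun k _ => Finset.sum_congr rfl fun l _ => ?_
      rw [hAsymm l k]
      ring
    simp only [hterm, Finset.sum_add_distrib]
    rw [hPinner a u, hcross]
    ring
  -- ## Step 7 : the multiplier κ
  have hexpImeas : ∀ {f : 𝔾 → ℝ}, Continuous f → Measurable fun u : 𝔾 => expI (f u) := by
    intro f hf
    have : (fun u : 𝔾 => expI (f u))
        = fun u => Complex.exp ((fun u : 𝔾 => Complex.I * ((f u : ℝ) : ℂ)) u) := rfl
    rw [this]
    exact Complex.continuous_exp.measurable.comp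
      (measurable_const.mul (Complex.measurable_ofReal.comp hf.measurable))
  have hcoordcont : ∀ i : Fin d, Continuous fun x : 𝔾 => x i := by
    intro i
    have : (fun x : 𝔾 => x i)
        = fun x : 𝔾 => ⟪x, (EuclideanSpace.single i (1:ℝ) : 𝔾)⟫ :=
      funext fun x => (hinner_single x i).symm
    rw [this]
    exact continuous_id.inner continuous_const
  have hQuadcont : Continuous fun x : 𝔾 => ∑ i, ∑ j, A i j * x i * x j := by
    refine continuous_finset_sum _ fun i _ => continuous_finset_sum _ fun j _ => ?_
    exact (continuous_const.mul (hcoordcont i)).mul (hcoordcont j)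
  have hρmeas : Measurable fun u : 𝔾 =>
      ξ u * expI (-(∑ i, ∑ j, A i j * u i * u j)) :=
    hξmeas.mul (hexpImeas hQuadcont.neg)
  have hρrel : ∀ a : 𝔾, ∀ᵐ u : 𝔾,
      ξ (u + a) * expI (-(∑ i, ∑ j, A i j * (u + a) i * (u + a) j))
        = expI (Q a - ∑ i, ∑ j, A i j * a i * a j)
          * (ξ u * expI (-(∑ i, ∑ j, A i j * u i * u j))) := by
    intro a
    filter_upwards [hPQ a, hξ1] with u h1 h2
    have hXX : conj (ξ u) * ξ u = 1 := by
      rw [mul_comm, Complex.mul_conj, Complex.normSq_eq_norm_sq, h2]; norm_num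
    have hξa : ξ (u + a) = expI (⟪P a, u⟫ + Q a) * ξ u := by
      calc ξ (u + a) = ξ (u + a) * (conj (ξ u) * ξ u) := by rw [hXX, mul_one]
        _ = (ξ (u + a) * conj (ξ u)) * ξ u := by ring
        _ = expI (⟪P a, u⟫ + Q a) * ξ u := by rw [h1]
    rw [hξa, hQuadadd u a]
    rw [show expI (⟪P a, u⟫ + Q a) * ξ u
        * expI (-((∑ i, ∑ j, A i j * u i * u j) + ⟪P a, u⟫
            + (∑ i, ∑ j, A i j * a i * a j)))
        = ξ u * (expI (⟪P a, u⟫ + Q a)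
            * expI (-((∑ i, ∑ j, A i j * u i * u j) + ⟪P a, u⟫
              + (∑ i, ∑ j, A i j * a i * a j)))) from by ring]
    rw [show expI (Q a - ∑ i, ∑ j, A i j * a i * a j)
        * (ξ u * expI (-(∑ i, ∑ j, A i j * u i * u j)))
        = ξ u * (expI (Q a - ∑ i, ∑ j, A i j * a i * a j)
            * expI (-(∑ i, ∑ j, A i j * u i * u j))) from by ring]
    rw [← expI_add, ← expI_add]
    congr 2
    ring
  have hκhom : ∀ a b : 𝔾, expI (Q (a + b) - ∑ i, ∑ j, A i j * (a + b) i * (a + b) j)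
      = expI (Q a - ∑ i, ∑ j, A i j * a i * a j)
        * expI (Q b - ∑ i, ∑ j, A i j * b i * b j) := by
    intro a b
    have h1 := (hPQadd a b).2
    have h2 : (∑ i, ∑ j, A i j * (a + b) i * (a + b) j)
        = (∑ i, ∑ j, A i j * b i * b j) + ⟪P a, b⟫
          + (∑ i, ∑ j, A i j * a i * a j) := by
      rw [add_comm a b]; exact hQuadadd b a
    rw [show Q (a + b) - (∑ i, ∑ j, A i j * (a + b) i * (a + b) j)
        = Q (a + b) + (-(∑ i, ∑ j, A i j * (a + b) i * (a + b) j)) from by ring,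
      expI_add, h1, h2, ← expI_add, ← expI_add]
    congr 1
    ring
  have hκmeas : Measurable fun a : 𝔾 =>
      expI (Q a - ∑ i, ∑ j, A i j * a i * a j) := by
    have hid : ∀ a : 𝔾,
        (∫ u in B, (ξ (u + a) * expI (-(∑ i, ∑ j, A i j * (u + a) i * (u + a) j)))
          * conj (ξ u * expI (-(∑ i, ∑ j, A i j * u i * u j))))
        = (vB : ℂ) * expI (Q a - ∑ i, ∑ j, A i j * a i * a j) := by
      intro a
      have hae2 : ∀ᵐ u : 𝔾,
          (ξ (u + a) * expI (-(∑ i, ∑ j, A i j * (u + a) i * (u + a) j)))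
            * conj (ξ u * expI (-(∑ i, ∑ j, A i j * u i * u j)))
          = expI (Q a - ∑ i, ∑ j, A i j * a i * a j) := by
        filter_upwards [hρrel a, hξ1] with u h1 h2
        rw [h1]
        have habsρ : ‖ξ u * expI (-(∑ i, ∑ j, A i j * u i * u j))‖ = 1 := by
          rw [norm_mul, h2, abs_expI, mul_one]
        have hρρ : (ξ u * expI (-(∑ i, ∑ j, A i j * u i * u j)))
            * conj (ξ u * expI (-(∑ i, ∑ j, A i j * u i * u j))) = 1 := by
          rw [Complex.mul_conj, Complex.normSq_eq_norm_sq, habsρ]; norm_num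
        calc expI (Q a - ∑ i, ∑ j, A i j * a i * a j)
              * (ξ u * expI (-(∑ i, ∑ j, A i j * u i * u j)))
              * conj (ξ u * expI (-(∑ i, ∑ j, A i j * u i * u j)))
            = expI (Q a - ∑ i, ∑ j, A i j * a i * a j)
              * ((ξ u * expI (-(∑ i, ∑ j, A i j * u i * u j)))
                * conj (ξ u * expI (-(∑ i, ∑ j, A i j * u i * u j)))) := by ring
          _ = expI (Q a - ∑ i, ∑ j, A i j * a i * a j) := by rw [hρρ, mul_one]
      rw [setIntegral_congr_ae hBmeas (hae2.mono fun u hu _ => hu), setIntegral_const,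
        measureReal_def, ← hvB, Complex.real_smul]
    have hmeas2 : Measurable fun a : 𝔾 =>
        ∫ u in B, (ξ (u + a) * expI (-(∑ i, ∑ j, A i j * (u + a) i * (u + a) j)))
          * conj (ξ u * expI (-(∑ i, ∑ j, A i j * u i * u j))) := by
      have hjoint : StronglyMeasurable fun p : 𝔾 × 𝔾 =>
          (ξ (p.2 + p.1) * expI (-(∑ i, ∑ j, A i j * (p.2 + p.1) i * (p.2 + p.1) j)))
            * conj (ξ p.2 * expI (-(∑ i, ∑ j, A i j * p.2 i * p.2 j))) := by
        apply Measurable.stronglyMeasurable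
        exact ((hρmeas.comp (measurable_snd.add measurable_fst)).mul
          (hconjmeas.comp (hρmeas.comp measurable_snd)))
      exact hjoint.integral_prod_right'.measurable
    have heq : (fun a : 𝔾 => expI (Q a - ∑ i, ∑ j, A i j * a i * a j))
        = fun a => (∫ u in B,
            (ξ (u + a) * expI (-(∑ i, ∑ j, A i j * (u + a) i * (u + a) j)))
              * conj (ξ u * expI (-(∑ i, ∑ j, A i j * u i * u j)))) * (vB : ℂ)⁻¹ := by
      funext a
      rw [hid a]
      field_simp
    rw [heq]
    exact hmeas2.mul_const _
  have hκ0 : expI (Q 0 - ∑ i, ∑ j, A i j * (0:𝔾) i * (0:𝔾) j) = 1 := by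
    have h := hκhom 0 0
    rw [add_zero] at h
    have hne := expI_ne_zero (Q 0 - ∑ i, ∑ j, A i j * (0:𝔾) i * (0:𝔾) j)
    have h2 : expI (Q 0 - ∑ i, ∑ j, A i j * (0:𝔾) i * (0:𝔾) j) * 1
        = expI (Q 0 - ∑ i, ∑ j, A i j * (0:𝔾) i * (0:𝔾) j)
          * expI (Q 0 - ∑ i, ∑ j, A i j * (0:𝔾) i * (0:𝔾) j) := by
      rw [mul_one]; exact h
    exact (mul_left_cancel₀ hne h2).symm
  -- ## Step 8 : classification of κ
  have hβex : ∀ j : Fin d, ∃ b : ℝ, ∀ s : ℝ,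
      expI (Q (s • (EuclideanSpace.single j (1:ℝ) : 𝔾))
        - ∑ i, ∑ k, A i k * (s • (EuclideanSpace.single j (1:ℝ) : 𝔾)) i
            * (s • (EuclideanSpace.single j (1:ℝ) : 𝔾)) k) = expI (b * s) := by
    intro j
    apply oneD
    · exact hκmeas.comp (continuous_id.smul
        (continuous_const : Continuous fun _ : ℝ =>
          (EuclideanSpace.single j (1:ℝ) : 𝔾))).measurable
    · exact fun s => abs_expI _
    · intro x y
      rw [add_smul]
      exact hκhom _ _
  choose β hβs using hβex
  have hκsum : ∀ (v : Fin d → 𝔾) (n : Finset (Fin d)),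
      expI (Q (∑ j ∈ n, v j) - ∑ i, ∑ k, A i k * (∑ j ∈ n, v j) i * (∑ j ∈ n, v j) k)
      = ∏ j ∈ n, expI (Q (v j) - ∑ i, ∑ k, A i k * (v j) i * (v j) k) := by
    intro v n
    induction n using Finset.induction_on with
    | empty => simpa using hκ0
    | insert _ _ hx ih =>
      rw [Finset.sum_insert hx, Finset.prod_insert hx, hκhom, ih]
  have hκa : ∀ a : 𝔾, expI (Q a - ∑ i, ∑ j, A i j * a i * a j)
      = expI (∑ j, β j * a j) := by
    intro a
    calc expI (Q a - ∑ i, ∑ j, A i j * a i * a j)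
        = expI (Q (∑ j, a j • (EuclideanSpace.single j (1:ℝ) : 𝔾))
            - ∑ i, ∑ k, A i k * (∑ j, a j • (EuclideanSpace.single j (1:ℝ) : 𝔾)) i
              * (∑ j, a j • (EuclideanSpace.single j (1:ℝ) : 𝔾)) k) := by
          rw [hdecomp]
      _ = ∏ j, expI (Q (a j • (EuclideanSpace.single j (1:ℝ) : 𝔾))
            - ∑ i, ∑ k, A i k * (a j • (EuclideanSpace.single j (1:ℝ) : 𝔾)) i
              * (a j • (EuclideanSpace.single j (1:ℝ) : 𝔾)) k) := hκsum _ _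
      _ = ∏ j, expI (β j * a j) := Finset.prod_congr rfl fun j _ => hβs j (a j)
      _ = expI (∑ j, β j * a j) := (expI_sum _ _).symm
  set βv : 𝔾 := ∑ j, β j • (EuclideanSpace.single j (1:ℝ) : 𝔾) with hβv
  have hβinner : ∀ a : 𝔾, ⟪βv, a⟫ = ∑ j, β j * a j := by
    intro a
    rw [hβv, sum_inner]
    refine Finset.sum_congr rfl fun j _ => ?_
    rw [real_inner_smul_left]
    congr 1
    rw [real_inner_comm]
    exact hinner_single a j
  -- ## Step 9 : σ is a.e. constant
  have hphasecont : Continuous fun u : 𝔾 => -((∑ i, ∑ j, A i j * u i * u j) + ⟪βv, u⟫) :=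
    (hQuadcont.add (continuous_const.inner continuous_id)).neg
  have hσmeas : Measurable fun u : 𝔾 =>
      ξ u * expI (-((∑ i, ∑ j, A i j * u i * u j) + ⟪βv, u⟫)) :=
    hξmeas.mul (hexpImeas hphasecont)
  have hσshift : ∀ a : 𝔾, ∀ᵐ u : 𝔾,
      ξ (u + a) * expI (-((∑ i, ∑ j, A i j * (u + a) i * (u + a) j) + ⟪βv, u + a⟫))
      = ξ u * expI (-((∑ i, ∑ j, A i j * u i * u j) + ⟪βv, u⟫)) := by
    intro a
    filter_upwards [hρrel a] with u h1
    have hba : expI (Q a - ∑ i, ∑ j, A i j * a i * a j) = expI ⟪βv, a⟫ := by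
      rw [hκa a, hβinner a]
    have hsplit : ξ (u + a)
        * expI (-((∑ i, ∑ j, A i j * (u + a) i * (u + a) j) + ⟪βv, u + a⟫))
        = (ξ (u + a) * expI (-(∑ i, ∑ j, A i j * (u + a) i * (u + a) j)))
          * expI (-(⟪βv, u + a⟫)) := by
      rw [mul_assoc, ← expI_add]
      congr 2
      ring
    rw [hsplit, h1, hba, inner_add_right]
    rw [show ξ u * expI (-((∑ i, ∑ j, A i j * u i * u j) + ⟪βv, u⟫))
        = (ξ u * expI (-(∑ i, ∑ j, A i j * u i * u j))) * expI (-(⟪βv, u⟫)) from by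
      rw [mul_assoc, ← expI_add]; congr 2; ring]
    rw [show (-(⟪βv, u⟫ + ⟪βv, a⟫) : ℝ) = -⟪βv, u⟫ + -⟪βv, a⟫ from by ring, expI_add]
    rw [show expI ⟪βv, a⟫ * (ξ u * expI (-(∑ i, ∑ j, A i j * u i * u j)))
        * (expI (-⟪βv, u⟫) * expI (-⟪βv, a⟫))
        = (ξ u * expI (-(∑ i, ∑ j, A i j * u i * u j))) * expI (-⟪βv, u⟫)
          * (expI ⟪βv, a⟫ * expI (-⟪βv, a⟫)) from by ring,
      expI_mul_expI_neg, mul_one]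
  set σ : 𝔾 → ℂ := fun u =>
    ξ u * expI (-((∑ i, ∑ j, A i j * u i * u j) + ⟪βv, u⟫)) with hσdef
  have habsσ : ∀ᵐ u : 𝔾, ‖σ u‖ = 1 := by
    filter_upwards [hξ1] with u h
    rw [hσdef]
    simp only []
    rw [norm_mul, h, abs_expI, mul_one]
  have hprodset : MeasurableSet {p : 𝔾 × 𝔾 | σ (p.2 + p.1) = σ p.2} :=
    measurableSet_eq_fun (hσmeas.comp (measurable_snd.add measurable_fst))
      (hσmeas.comp measurable_snd)
  have hprodae : ∀ᵐ p : 𝔾 × 𝔾 ∂((volume : Measure 𝔾).prod volume),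
      σ (p.2 + p.1) = σ p.2 := by
    rw [ae_iff]
    have hcompl : (((volume : Measure 𝔾).prod volume))
        ({p : 𝔾 × 𝔾 | σ (p.2 + p.1) = σ p.2}ᶜ) = 0 := by
      rw [Measure.prod_apply hprodset.compl]
      have hz : ∀ a : 𝔾,
          (volume : Measure 𝔾) (Prod.mk a ⁻¹' {p : 𝔾 × 𝔾 | σ (p.2 + p.1) = σ p.2}ᶜ) = 0 := by
        intro a
        have h := hσshift a
        rw [ae_iff] at h
        exact h
      rw [lintegral_congr hz]
      simp
    exact hcompl
  have hswapae : ∀ᵐ p : 𝔾 × 𝔾 ∂((volume : Measure 𝔾).prod volume),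
      σ (p.1 + p.2) = σ p.1 := by
    have hqmp := (Measure.measurePreserving_swap :
      MeasurePreserving Prod.swap ((volume : Measure 𝔾).prod volume)
        ((volume : Measure 𝔾).prod volume)).quasiMeasurePreserving
    have h2 := hqmp.ae (p := fun q : 𝔾 × 𝔾 => σ (q.2 + q.1) = σ q.2) hprodae
    filter_upwards [h2] with p hp
    simpa using hp
  have haeae := Measure.ae_ae_of_ae_prod hswapae
  obtain ⟨u₀, hu₀, hu₀abs⟩ := ae_exists (haeae.and habsσ)
  have hσconst : ∀ᵐ v : 𝔾, σ v = σ u₀ := by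
    have := ae_shift (-u₀) hu₀
    filter_upwards [this] with v hv
    rwa [show u₀ + (v + -u₀) = v from by module] at hv
  have hσu₀ : σ u₀ = expI (σ u₀).arg := by
    have h := Complex.norm_mul_exp_arg_mul_I (σ u₀)
    rw [hu₀abs] at h
    rw [expI, mul_comm]
    simpa using h.symm
  have hξfinal : ∀ᵐ t : 𝔾, ξ t
      = expI ((∑ i, ∑ j, A i j * t i * t j) + ⟪βv, t⟫ + (σ u₀).arg) := by
    filter_upwards [hσconst] with t ht
    rw [hσu₀] at ht
    have h2 := congrArg
      (fun z : ℂ => z * expI ((∑ i, ∑ j, A i j * t i * t j) + ⟪βv, t⟫)) ht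
    simp only [] at h2
    rw [hσdef] at h2
    simp only [] at h2
    rw [mul_assoc, ← expI_add, neg_add_cancel, expI_zero, mul_one, ← expI_add] at h2
    rw [h2]
    congr 1
    ring
  -- ## Step 10 : the formula for η
  obtain ⟨ω₀, hω₀⟩ := ae_exists hfe'
  have hηcomb : ∀ᵐ t : 𝔾, η (t - (2:ℝ)⁻¹ • ω₀)
      = expI (-(∑ i, ∑ j, A i j * (t - (2:ℝ)⁻¹ • ω₀) i * (t - (2:ℝ)⁻¹ • ω₀) j)
          + ⟪μ ω₀ - P ω₀ - βv, t - (2:ℝ)⁻¹ • ω₀⟫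
          + (⟪μ ω₀, (2:ℝ)⁻¹ • ω₀⟫ + ν ω₀ - (∑ i, ∑ j, A i j * ω₀ i * ω₀ j)
            - ⟪βv, ω₀⟫ - (σ u₀).arg)) := by
    have hξshift := ae_shift ((2:ℝ)⁻¹ • ω₀) hξfinal
    have hξabs := ae_shift ((2:ℝ)⁻¹ • ω₀) hξ1
    filter_upwards [hω₀, hξshift, hξabs] with t h1 h2 h3
    have hXconj : conj (ξ (t + (2:ℝ)⁻¹ • ω₀)) * ξ (t + (2:ℝ)⁻¹ • ω₀) = 1 := by
      rw [mul_comm, Complex.mul_conj, Complex.normSq_eq_norm_sq, h3]; norm_num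
    have hstep : η (t - (2:ℝ)⁻¹ • ω₀) = expI (⟪μ ω₀, t⟫ + ν ω₀)
        * expI (-((∑ i, ∑ j, A i j * (t + (2:ℝ)⁻¹ • ω₀) i * (t + (2:ℝ)⁻¹ • ω₀) j)
            + ⟪βv, t + (2:ℝ)⁻¹ • ω₀⟫ + (σ u₀).arg)) := by
      calc η (t - (2:ℝ)⁻¹ • ω₀)
          = (conj (ξ (t + (2:ℝ)⁻¹ • ω₀)) * ξ (t + (2:ℝ)⁻¹ • ω₀))
            * η (t - (2:ℝ)⁻¹ • ω₀) := by rw [hXconj, one_mul]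
        _ = conj (ξ (t + (2:ℝ)⁻¹ • ω₀))
            * (ξ (t + (2:ℝ)⁻¹ • ω₀) * η (t - (2:ℝ)⁻¹ • ω₀)) := by ring
        _ = conj (ξ (t + (2:ℝ)⁻¹ • ω₀)) * expI (⟪μ ω₀, t⟫ + ν ω₀) := by rw [h1]
        _ = expI (⟪μ ω₀, t⟫ + ν ω₀)
            * expI (-((∑ i, ∑ j, A i j * (t + (2:ℝ)⁻¹ • ω₀) i * (t + (2:ℝ)⁻¹ • ω₀) j)
              + ⟪βv, t + (2:ℝ)⁻¹ • ω₀⟫ + (σ u₀).arg)) := by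
            rw [h2, conj_expI]; ring
    rw [hstep, ← expI_add]
    congr 1
    rw [show t + (2:ℝ)⁻¹ • ω₀ = (t - (2:ℝ)⁻¹ • ω₀) + ω₀ from by module]
    rw [show (⟪μ ω₀, t⟫ : ℝ)
        = ⟪μ ω₀, (t - (2:ℝ)⁻¹ • ω₀) + (2:ℝ)⁻¹ • ω₀⟫ from by
      rw [show (t - (2:ℝ)⁻¹ • ω₀) + (2:ℝ)⁻¹ • ω₀ = t from by module]]
    rw [hQuadadd (t - (2:ℝ)⁻¹ • ω₀) ω₀]
    simp only [inner_add_right, inner_sub_left]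
    ring
  have hηfinal : ∀ᵐ s : 𝔾, η s
      = expI (-(∑ i, ∑ j, A i j * s i * s j) + ⟪μ ω₀ - P ω₀ - βv, s⟫
          + (⟪μ ω₀, (2:ℝ)⁻¹ • ω₀⟫ + ν ω₀ - (∑ i, ∑ j, A i j * ω₀ i * ω₀ j)
            - ⟪βv, ω₀⟫ - (σ u₀).arg)) := by
    have := ae_shift ((2:ℝ)⁻¹ • ω₀) hηcomb
    filter_upwards [this] with s hs
    rwa [add_sub_cancel_right] at hs
  exact ⟨A, hAIsSymm, βv, μ ω₀ - P ω₀ - βv, (σ u₀).arg,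
    ⟪μ ω₀, (2:ℝ)⁻¹ • ω₀⟫ + ν ω₀ - (∑ i, ∑ j, A i j * ω₀ i * ω₀ j)
      - ⟪βv, ω₀⟫ - (σ u₀).arg, hξfinal, hηfinal⟩

end Main

end

end QCauchy

/-- Quadratic extension of Cauchy's functional equation: if `ξ, η : ℝ^d → ℂ` are measurable
and unimodular a.e., and for some (not necessarily measurable) `μ : ℝ^d → ℝ^d`, `ν : ℝ^d → ℝ`
one has `ξ(t + ω/2) η(t − ω/2) = exp(i μ(ω)·t + i ν(ω))` for a.e. `ω` and a.e. `t`, then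
`ξ(t) = exp(i t·At + i ξ̄·t + iγ)` and `η(t) = exp(−i t·At + i η̄·t + iδ)` a.e., for some real
symmetric matrix `A`, vectors `ξ̄, η̄` and reals `γ, δ`. -/
theorem stmt_5 (d : ℕ) (ξ η : EuclideanSpace ℝ (Fin d) → ℂ)
    (hξmeas : Measurable ξ) (hηmeas : Measurable η)
    (hξ1 : ∀ᵐ t : EuclideanSpace ℝ (Fin d), ‖ξ t‖ = 1)
    (hη1 : ∀ᵐ t : EuclideanSpace ℝ (Fin d), ‖η t‖ = 1)
    (μ : EuclideanSpace ℝ (Fin d) → EuclideanSpace ℝ (Fin d))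
    (ν : EuclideanSpace ℝ (Fin d) → ℝ)
    (hfe : ∀ᵐ ω : EuclideanSpace ℝ (Fin d), ∀ᵐ t : EuclideanSpace ℝ (Fin d),
      ξ (t + (2 : ℝ)⁻¹ • ω) * η (t - (2 : ℝ)⁻¹ • ω) =
        Complex.exp (Complex.I * ((⟪μ ω, t⟫ + ν ω : ℝ) : ℂ))) :
    ∃ (A : Matrix (Fin d) (Fin d) ℝ), A.IsSymm ∧
      ∃ (ξbar ηbar : EuclideanSpace ℝ (Fin d)) (γ δ : ℝ),
        (∀ᵐ t : EuclideanSpace ℝ (Fin d),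
          ξ t = Complex.exp (Complex.I *
            (((∑ i, ∑ j, A i j * t i * t j) + ⟪ξbar, t⟫ + γ : ℝ) : ℂ))) ∧
        (∀ᵐ t : EuclideanSpace ℝ (Fin d),
          η t = Complex.exp (Complex.I *
            ((-(∑ i, ∑ j, A i j * t i * t j) + ⟪ηbar, t⟫ + δ : ℝ) : ℂ))) := by
  exact QCauchy.main d ξ η hξmeas hηmeas hξ1 hη1 μ ν hfe
end

section
/- Let H ↪ H₀ be a compact dense injective embedding of Hilbert spaces and A : H → H the bounded positive compact self-adjoint operator with (Au, v)_H = (u, v)_{H₀}. Define F[f] = ‖f‖_H² − ‖f‖_{H₀}² and Ω = { f ∈ H : ‖f‖_{H₀} = 1 }. If f₀ ∈ Ω minimizes F over Ω with minimum value λ = F[f₀], then A f₀ = (1/(λ+1)) f₀, and 1/(λ+1) is the largest eigenvalue of A. Conversely, if μ is any eigenvalue of A with normalized eigenvector v_μ ∈ Ω, then F[v_μ] = 1/μ − 1 ≥ λ. -/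
open scoped ComplexInnerProductSpace

/-!
By rescaling, `f₀` maximizes the Rayleigh quotient `‖T f‖² / ‖f‖²`, so with
`c = 1 / ‖f₀‖² = 1 / (λ + 1)` the operator `c • 1 - A` is positive and its quadratic form vanishes
at `f₀`. A positive operator annihilates every vector at which its form vanishes, hence
`A f₀ = c • f₀`. For an eigenpair `A v = μ • v` one has `μ ‖v‖² = ⟪A v, v⟫ = ‖T v‖² ≤ c ‖v‖²`,
which bounds `μ` by `c`, and gives `‖v‖² = 1 / μ` when `‖T v‖ = 1`.
-/

open RCLike

theorem LinearMap.norm_apply_mul_norm_le_of_forall_norm_le {𝕜 E F : Type*} [RCLike 𝕜]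
    [NormedAddCommGroup E] [NormedSpace 𝕜 E] [SeminormedAddCommGroup F] [NormedSpace 𝕜 F]
    (T : E →ₗ[𝕜] F) {f₀ : E}
    (hmin : ∀ f, ‖T f‖ = 1 → ‖f₀‖ ≤ ‖f‖) (f : E) : ‖T f‖ * ‖f₀‖ ≤ ‖f‖ := by
  rcases eq_or_ne ‖T f‖ 0 with hTf | hTf
  · simp [hTf]
  have hnormalized : ‖T ((‖T f‖⁻¹ : 𝕜) • f)‖ = 1 := by
    rw [map_smul, norm_smul, norm_inv, norm_algebraMap', norm_norm, inv_mul_cancel₀ hTf]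
  have := hmin _ hnormalized
  rw [norm_smul, norm_inv, norm_algebraMap', norm_norm] at this
  rwa [le_inv_mul_iff₀ ((norm_nonneg _).lt_of_ne' hTf)] at this

theorem LinearMap.IsPositive.apply_eq_zero_of_re_inner_eq_zero {𝕜 E : Type*} [RCLike 𝕜]
    [NormedAddCommGroup E] [InnerProductSpace 𝕜 E] {S : E →ₗ[𝕜] E} (hS : S.IsPositive)
    {x : E} (hx : re (inner 𝕜 (S x) x) = 0) : S x = 0 := by
  -- the form along the line `x + t • S x` is a quadratic in `t` with linear coefficient `2 ‖S x‖²`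
  have hquad : ∀ t : ℝ, 0 ≤ re (inner 𝕜 (S (S x)) (S x)) * (t * t) + 2 * ‖S x‖ ^ 2 * t + 0 := by
    intro t
    have := hS.re_inner_nonneg_left (x + (t : 𝕜) • S x)
    rw [map_add, map_smul, inner_add_left, inner_add_right, inner_add_right, inner_smul_left,
      inner_smul_right, inner_smul_right, inner_smul_left, hS.isSymmetric (S x) x] at this
    simp only [conj_ofReal, map_add, re_ofReal_mul, ← mul_assoc, ← ofReal_mul, hx,
      inner_self_eq_norm_sq] at this
    linarith
  have := discrim_le_zero hquad
  rw [discrim] at this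
  simpa using this

section GramOperator

variable {𝕜 E F : Type*} [RCLike 𝕜] [NormedAddCommGroup E] [InnerProductSpace 𝕜 E]
  [NormedAddCommGroup F] [InnerProductSpace 𝕜 F] {T : E →ₗ[𝕜] F} {A : E →ₗ[𝕜] E}

theorem isSymmetric_of_inner_map_eq_inner (hA : ∀ u v, inner 𝕜 (A u) v = inner 𝕜 (T u) (T v)) :
    A.IsSymmetric := fun u v => by
  rw [hA, ← inner_conj_symm u, hA, inner_conj_symm]

theorem re_inner_map_self_eq_norm_sq (hA : ∀ u v, inner 𝕜 (A u) v = inner 𝕜 (T u) (T v))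
    (u : E) : re (inner 𝕜 (A u) u) = ‖T u‖ ^ 2 := by
  rw [hA, inner_self_eq_norm_sq]

theorem mul_norm_sq_eq_of_apply_eq_smul (hA : ∀ u v, inner 𝕜 (A u) v = inner 𝕜 (T u) (T v))
    {μ : ℝ} {v : E} (hv : A v = (μ : 𝕜) • v) : μ * ‖v‖ ^ 2 = ‖T v‖ ^ 2 := by
  rw [← re_inner_map_self_eq_norm_sq hA, hv, inner_smul_left, conj_ofReal, re_ofReal_mul,
    inner_self_eq_norm_sq]

theorem re_inner_smul_id_sub_self (hA : ∀ u v, inner 𝕜 (A u) v = inner 𝕜 (T u) (T v))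
    (c : ℝ) (f : E) :
    re (inner 𝕜 (((c : 𝕜) • LinearMap.id - A : E →ₗ[𝕜] E) f) f) = c * ‖f‖ ^ 2 - ‖T f‖ ^ 2 := by
  rw [LinearMap.sub_apply, inner_sub_left, map_sub, re_inner_map_self_eq_norm_sq hA,
    LinearMap.smul_apply, LinearMap.id_apply, inner_smul_left, conj_ofReal, re_ofReal_mul,
    inner_self_eq_norm_sq]

theorem isPositive_smul_id_sub (hA : ∀ u v, inner 𝕜 (A u) v = inner 𝕜 (T u) (T v))
    {c : ℝ} (hc : ∀ f, ‖T f‖ ^ 2 ≤ c * ‖f‖ ^ 2) :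
    ((c : 𝕜) • LinearMap.id - A : E →ₗ[𝕜] E).IsPositive :=
  ⟨(LinearMap.IsSymmetric.id.smul (conj_ofReal c)).sub (isSymmetric_of_inner_map_eq_inner hA),
    fun f => by rw [re_inner_smul_id_sub_self hA, sub_nonneg]; exact hc f⟩

theorem apply_eq_smul_of_norm_sq_eq (hA : ∀ u v, inner 𝕜 (A u) v = inner 𝕜 (T u) (T v))
    {c : ℝ} (hc : ∀ f, ‖T f‖ ^ 2 ≤ c * ‖f‖ ^ 2) {f₀ : E} (hf₀ : ‖T f₀‖ ^ 2 = c * ‖f₀‖ ^ 2) :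
    A f₀ = (c : 𝕜) • f₀ := by
  have := (isPositive_smul_id_sub hA hc).apply_eq_zero_of_re_inner_eq_zero
    (by rw [re_inner_smul_id_sub_self hA, hf₀, sub_self])
  rw [LinearMap.sub_apply, sub_eq_zero] at this
  exact this.symm

theorem le_of_apply_eq_smul (hA : ∀ u v, inner 𝕜 (A u) v = inner 𝕜 (T u) (T v))
    {c : ℝ} (hc : ∀ f, ‖T f‖ ^ 2 ≤ c * ‖f‖ ^ 2) {μ : ℝ} {v : E} (hv₀ : v ≠ 0)
    (hv : A v = (μ : 𝕜) • v) : μ ≤ c := by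
  have hle := hc v
  rw [← mul_norm_sq_eq_of_apply_eq_smul hA hv] at hle
  exact le_of_mul_le_mul_right hle (by positivity)

end GramOperator

theorem stmt_14_general {H H₀ : Type*}
    [NormedAddCommGroup H] [InnerProductSpace ℂ H]
    [NormedAddCommGroup H₀] [InnerProductSpace ℂ H₀]
    (T : H →L[ℂ] H₀)
    (A : H →L[ℂ] H) (hA : ∀ u v : H, ⟪A u, v⟫ = ⟪T u, T v⟫)
    (F : H → ℝ) (hF : ∀ f : H, F f = ‖f‖ ^ 2 - ‖T f‖ ^ 2)
    (f₀ : H) (hf₀ : ‖T f₀‖ = 1) (hmin : ∀ f : H, ‖T f‖ = 1 → F f₀ ≤ F f)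
    (lam : ℝ) (hlam : lam = F f₀) :
    A f₀ = ((1 / (lam + 1) : ℝ) : ℂ) • f₀ ∧
    (∀ μ : ℝ, (∃ v : H, v ≠ 0 ∧ A v = (μ : ℂ) • v) → μ ≤ 1 / (lam + 1)) ∧
    (∀ μ : ℝ, ∀ v : H, A v = (μ : ℂ) • v → ‖T v‖ = 1 →
      F v = 1 / μ - 1 ∧ lam ≤ 1 / μ - 1) := by
  have hA' : ∀ u v, ⟪A.toLinearMap u, v⟫ = ⟪T.toLinearMap u, T.toLinearMap v⟫ := hA
  have hnorm : lam + 1 = ‖f₀‖ ^ 2 := by rw [hlam, hF, hf₀]; ring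
  have hf₀pos : 0 < ‖f₀‖ := norm_pos_iff.mpr (by rintro rfl; simp at hf₀)
  have hnorm_le : ∀ f, ‖T f‖ = 1 → ‖f₀‖ ≤ ‖f‖ := fun f hf => by
    have := hmin f hf
    rw [hF, hF, hf₀, hf] at this
    exact pow_le_pow_iff_left₀ (norm_nonneg _) (norm_nonneg _) two_ne_zero |>.mp (by linarith)
  have hbound : ∀ f, ‖T f‖ ^ 2 ≤ 1 / (lam + 1) * ‖f‖ ^ 2 := fun f => by
    rw [hnorm, one_div_mul_eq_div, le_div_iff₀ (by positivity), ← mul_pow]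
    exact pow_le_pow_left₀ (by positivity)
      (T.toLinearMap.norm_apply_mul_norm_le_of_forall_norm_le hnorm_le f) 2
  refine ⟨apply_eq_smul_of_norm_sq_eq hA' hbound ?_, fun μ ⟨v, hv₀, hv⟩ =>
    le_of_apply_eq_smul hA' hbound hv₀ hv, fun μ v hv hTv => ?_⟩
  · rw [ContinuousLinearMap.coe_coe, hf₀, hnorm, one_pow, one_div_mul_cancel (by positivity)]
  have hv_sq : ‖v‖ ^ 2 = 1 / μ := by
    have := mul_norm_sq_eq_of_apply_eq_smul hA' hv
    rw [ContinuousLinearMap.coe_coe, hTv, one_pow] at this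
    exact eq_one_div_of_mul_eq_one_right this
  have hFv : F v = 1 / μ - 1 := by rw [hF, hv_sq, hTv, one_pow]
  exact ⟨hFv, hFv ▸ hlam ▸ hmin v hTv⟩

/-- Euler–Lagrange equation in the Hilbert setting: for a compact dense injective embedding
`T : H ↪ H₀` of Hilbert spaces, `A : H → H` with `(Au,v)_H = (Tu,Tv)_{H₀}`,
`F[f] = ‖f‖_H² − ‖f‖_{H₀}²` and `Ω = {f : ‖f‖_{H₀} = 1}`: if `f₀ ∈ Ω` minimizes `F` over `Ω`
with minimum `λ = F[f₀]`, then `A f₀ = (1/(λ+1)) f₀` and `1/(λ+1)` is the largest eigenvalue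
of `A`; moreover any eigenvalue `μ` of `A` with normalized eigenvector `v_μ ∈ Ω` satisfies
`F[v_μ] = 1/μ − 1 ≥ λ`. -/
theorem stmt_14 {H H₀ : Type*}
    [NormedAddCommGroup H] [InnerProductSpace ℂ H] [CompleteSpace H]
    [NormedAddCommGroup H₀] [InnerProductSpace ℂ H₀] [CompleteSpace H₀]
    (T : H →L[ℂ] H₀) (hTinj : Function.Injective T) (hTcomp : IsCompactOperator T)
    (hTdense : DenseRange T)
    (A : H →L[ℂ] H) (hA : ∀ u v : H, ⟪A u, v⟫ = ⟪T u, T v⟫)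
    (F : H → ℝ) (hF : ∀ f : H, F f = ‖f‖ ^ 2 - ‖T f‖ ^ 2)
    (f₀ : H) (hf₀ : ‖T f₀‖ = 1) (hmin : ∀ f : H, ‖T f‖ = 1 → F f₀ ≤ F f)
    (lam : ℝ) (hlam : lam = F f₀) :
    A f₀ = ((1 / (lam + 1) : ℝ) : ℂ) • f₀ ∧
    (∀ μ : ℝ, (∃ v : H, v ≠ 0 ∧ A v = (μ : ℂ) • v) → μ ≤ 1 / (lam + 1)) ∧
    (∀ μ : ℝ, ∀ v : H, A v = (μ : ℂ) • v → ‖T v‖ = 1 →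
      F v = 1 / μ - 1 ∧ lam ≤ 1 / μ - 1) :=
  stmt_14_general T A hA F hF f₀ hf₀ hmin lam hlam
end

section
/- Let H ↪ H₀ be a compact dense injective embedding of Hilbert spaces, F[f] = ‖f‖²_H − ‖f‖²_{H₀}, and Ω = { f ∈ H : ‖f‖_{H₀} = 1 }. If Ω is nonempty, then F attains its minimum on Ω: there exists f₀ ∈ Ω with F[f₀] ≤ F[f] for all f ∈ Ω. Consequently, with λ = F[f₀] ≥ 0, one has ‖f‖²_H ≥ (λ + 1) ‖f‖²_{H₀} for all f ∈ H. -/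
/-!
Minimising `F` on `Ω` amounts to finding a vector at which the compact operator `T` attains its
norm: if `‖e‖ ≤ 1` and `‖T e‖ = ‖T‖`, then `f₀ = e / ‖T‖` is the minimiser and `λ + 1 = ‖T‖⁻²`.
The norm is attained because a maximising sequence `g n` of unit-ball vectors is a sequence of
approximate eigenvectors of `T* T` for the eigenvalue `‖T‖²`, namely
`‖T* T g - ‖T‖² g‖² ≤ 2 ‖T‖² (‖T‖² - ‖T g‖²)`; compactness of `T` makes `T* T g n` converge
along a subsequence, and therefore so does `g n`.
-/

open Filter Topology Metric ContinuousLinearMap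

theorem IsCompactOperator.exists_subseq_tendsto {𝕜₁ 𝕜₂ E F : Type*}
    [NontriviallyNormedField 𝕜₁] [NontriviallyNormedField 𝕜₂] {σ : 𝕜₁ →+* 𝕜₂}
    [SeminormedAddCommGroup E] [NormedSpace 𝕜₁ E] [NormedAddCommGroup F] [NormedSpace 𝕜₂ F]
    {T : E →SL[σ] F} (hT : IsCompactOperator T) {g : ℕ → E} {R : ℝ} (hg : ∀ n, ‖g n‖ ≤ R) :
    ∃ (y : F) (φ : ℕ → ℕ), StrictMono φ ∧ Tendsto (fun n ↦ T (g (φ n))) atTop (𝓝 y) := by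
  obtain ⟨K, hK, hTK⟩ := hT.image_closedBall_subset_compact R
  obtain ⟨y, -, φ, hφ, hlim⟩ :=
    hK.tendsto_subseq fun n ↦ hTK ⟨g n, mem_closedBall_zero_iff.2 (hg n), rfl⟩
  exact ⟨y, φ, hφ, hlim⟩

theorem ContinuousLinearMap.exists_seq_norm_le_one_tendsto_opNorm {𝕜₁ 𝕜₂ E F : Type*}
    [DenselyNormedField 𝕜₁] [NontriviallyNormedField 𝕜₂] {σ : 𝕜₁ →+* 𝕜₂} [RingHomIsometric σ]
    [NormedAddCommGroup E] [NormedSpace 𝕜₁ E] [SeminormedAddCommGroup F] [NormedSpace 𝕜₂ F]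
    (T : E →SL[σ] F) :
    ∃ g : ℕ → E, (∀ n, ‖g n‖ ≤ 1) ∧ Tendsto (fun n ↦ ‖T (g n)‖) atTop (𝓝 ‖T‖) := by
  have hne : ((fun x ↦ ‖T x‖) '' closedBall 0 1).Nonempty :=
    (nonempty_closedBall.2 zero_le_one).image _
  have hbdd : BddAbove ((fun x ↦ ‖T x‖) '' closedBall 0 1) := by
    refine ⟨‖T‖, ?_⟩
    rintro - ⟨x, hx, rfl⟩
    exact T.unit_le_opNorm x (mem_closedBall_zero_iff.1 hx)
  obtain ⟨u, -, hu, hmem⟩ := exists_seq_tendsto_sSup hne hbdd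
  choose g hg hgu using hmem
  rw [sSup_unitClosedBall_eq_norm] at hu
  exact ⟨g, fun n ↦ mem_closedBall_zero_iff.1 (hg n), by simpa only [hgu] using hu⟩

section InnerProductSpace

variable {𝕜 E F : Type*} [RCLike 𝕜]
  [NormedAddCommGroup E] [InnerProductSpace 𝕜 E] [CompleteSpace E]
  [NormedAddCommGroup F] [InnerProductSpace 𝕜 F] [CompleteSpace F]

theorem ContinuousLinearMap.norm_adjoint_comp_self_apply_sub_sq_le (T : E →L[𝕜] F) {g : E}
    (hg : ‖g‖ ≤ 1) :
    ‖(adjoint T ∘L T) g - ((‖T‖ ^ 2 : ℝ) : 𝕜) • g‖ ^ 2 ≤ 2 * ‖T‖ ^ 2 * (‖T‖ ^ 2 - ‖T g‖ ^ 2) := by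
  have hinner : RCLike.re (inner 𝕜 ((adjoint T ∘L T) g) (((‖T‖ ^ 2 : ℝ) : 𝕜) • g)) =
      ‖T‖ ^ 2 * ‖T g‖ ^ 2 := by
    rw [inner_smul_right, RCLike.re_ofReal_mul, apply_norm_sq_eq_inner_adjoint_left]
  have hAg : ‖(adjoint T ∘L T) g‖ ≤ ‖T‖ ^ 2 :=
    calc ‖(adjoint T ∘L T) g‖ ≤ ‖adjoint T ∘L T‖ * ‖g‖ := le_opNorm _ _
      _ ≤ ‖T‖ ^ 2 := by
        rw [norm_adjoint_comp_self, ← sq]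
        exact mul_le_of_le_one_right (by positivity) hg
  have hcg : ‖((‖T‖ ^ 2 : ℝ) : 𝕜) • g‖ ≤ ‖T‖ ^ 2 := by
    rw [norm_smul, RCLike.norm_ofReal, abs_of_nonneg (by positivity)]
    exact mul_le_of_le_one_right (by positivity) hg
  rw [norm_sub_sq (𝕜 := 𝕜), hinner]
  nlinarith [pow_le_pow_left₀ (norm_nonneg _) hAg 2, pow_le_pow_left₀ (norm_nonneg _) hcg 2]

theorem IsCompactOperator.exists_norm_le_one_norm_apply_eq_opNorm {T : E →L[𝕜] F}
    (hT : IsCompactOperator T) : ∃ e : E, ‖e‖ ≤ 1 ∧ ‖T e‖ = ‖T‖ := by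
  rcases eq_or_ne ‖T‖ 0 with hT0 | hT0
  · exact ⟨0, by simp, by simp [hT0]⟩
  set c : 𝕜 := ((‖T‖ ^ 2 : ℝ) : 𝕜)
  have hc : c ≠ 0 := by simpa [c] using hT0
  obtain ⟨g, hg, hTg⟩ := T.exists_seq_norm_le_one_tendsto_opNorm
  have hdefect : Tendsto (fun n ↦ (adjoint T ∘L T) (g n) - c • g n) atTop (𝓝 0) := by
    have hbound : Tendsto (fun n ↦ √(2 * ‖T‖ ^ 2 * (‖T‖ ^ 2 - ‖T (g n)‖ ^ 2))) atTop (𝓝 0) := by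
      have h : Tendsto (fun n ↦ 2 * ‖T‖ ^ 2 * (‖T‖ ^ 2 - ‖T (g n)‖ ^ 2)) atTop
          (𝓝 (2 * ‖T‖ ^ 2 * (‖T‖ ^ 2 - ‖T‖ ^ 2))) :=
        (tendsto_const_nhds.sub (hTg.pow 2)).const_mul _
      rw [sub_self, mul_zero] at h
      simpa only [Real.sqrt_zero] using h.sqrt
    refine squeeze_zero_norm (fun n ↦ ?_) hbound
    exact Real.le_sqrt_of_sq_le (T.norm_adjoint_comp_self_apply_sub_sq_le (hg n))
  obtain ⟨y, φ, hφ, hy⟩ := hT.exists_subseq_tendsto hg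
  have hlim : Tendsto (fun n ↦ g (φ n)) atTop (𝓝 (c⁻¹ • adjoint T y)) := by
    have h := (((adjoint T).continuous.tendsto y).comp hy).sub (hdefect.comp hφ.tendsto_atTop)
    simpa [Function.comp_def, smul_smul, inv_mul_cancel₀ hc] using h.const_smul c⁻¹
  refine ⟨c⁻¹ • adjoint T y, le_of_tendsto' ((continuous_norm.tendsto _).comp hlim) fun n ↦ hg _,
    ?_⟩
  exact tendsto_nhds_unique ((T.continuous.norm.tendsto _).comp hlim) (hTg.comp hφ.tendsto_atTop)

end InnerProductSpace

theorem stmt_19_general {H H₀ : Type*}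
    [NormedAddCommGroup H] [InnerProductSpace ℂ H] [CompleteSpace H]
    [NormedAddCommGroup H₀] [InnerProductSpace ℂ H₀] [CompleteSpace H₀]
    (T : H →L[ℂ] H₀) (hTcomp : IsCompactOperator T)
    (hTnorm : ∀ f : H, ‖T f‖ ≤ ‖f‖)
    (F : H → ℝ) (hF : ∀ f : H, F f = ‖f‖ ^ 2 - ‖T f‖ ^ 2)
    (hΩ : ∃ f : H, ‖T f‖ = 1) :
    ∃ f₀ : H, ‖T f₀‖ = 1 ∧ (∀ f : H, ‖T f‖ = 1 → F f₀ ≤ F f) ∧ 0 ≤ F f₀ ∧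
      ∀ f : H, (F f₀ + 1) * ‖T f‖ ^ 2 ≤ ‖f‖ ^ 2 := by
  obtain ⟨w, hw⟩ := hΩ
  have hT : 0 < ‖T‖ := by
    refine (norm_nonneg T).lt_of_ne fun h ↦ ?_
    simp [norm_eq_zero.1 h.symm] at hw
  obtain ⟨e, he, hTe⟩ := hTcomp.exists_norm_le_one_norm_apply_eq_opNorm
  set f₀ : H := ((‖T‖⁻¹ : ℝ) : ℂ) • e
  have hTf₀ : ‖T f₀‖ = 1 := by
    rw [map_smul, norm_smul, Complex.norm_real, Real.norm_of_nonneg (by positivity), hTe,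
      inv_mul_cancel₀ hT.ne']
  have hf₀ : ‖f₀‖ ≤ ‖T‖⁻¹ := by
    rw [norm_smul, Complex.norm_real, Real.norm_of_nonneg (by positivity)]
    exact mul_le_of_le_one_right (by positivity) he
  have hF₀ : F f₀ + 1 = ‖f₀‖ ^ 2 := by rw [hF, hTf₀]; ring
  have hbound : ∀ f : H, ‖f₀‖ ^ 2 * ‖T f‖ ^ 2 ≤ ‖f‖ ^ 2 := fun f ↦
    calc ‖f₀‖ ^ 2 * ‖T f‖ ^ 2 ≤ (‖T‖⁻¹ * (‖T‖ * ‖f‖)) ^ 2 := by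
          rw [mul_pow]; gcongr; exact T.le_opNorm f
      _ = ‖f‖ ^ 2 := by rw [inv_mul_cancel_left₀ hT.ne']
  refine ⟨f₀, hTf₀, fun f hf ↦ ?_, ?_, fun f ↦ hF₀ ▸ hbound f⟩
  · have := hbound f
    rw [hf, one_pow, mul_one] at this
    rw [hF f, hf]
    linarith
  · nlinarith [hTnorm f₀]

/-- For a compact dense injective embedding `T : H ↪ H₀` of Hilbert spaces with
`‖Tf‖ ≤ ‖f‖`, the functional `F[f] = ‖f‖_H² − ‖f‖_{H₀}²` attains its minimum on
`Ω = {f : ‖f‖_{H₀} = 1}` (if nonempty), and with `λ = F[f₀] ≥ 0` one has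
`‖f‖_H² ≥ (λ+1)‖f‖_{H₀}²` for all `f ∈ H`. -/
theorem stmt_19 {H H₀ : Type*}
    [NormedAddCommGroup H] [InnerProductSpace ℂ H] [CompleteSpace H]
    [NormedAddCommGroup H₀] [InnerProductSpace ℂ H₀] [CompleteSpace H₀]
    (T : H →L[ℂ] H₀) (hTinj : Function.Injective T) (hTcomp : IsCompactOperator T)
    (hTdense : DenseRange T) (hTnorm : ∀ f : H, ‖T f‖ ≤ ‖f‖)
    (F : H → ℝ) (hF : ∀ f : H, F f = ‖f‖ ^ 2 - ‖T f‖ ^ 2)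
    (hΩ : ∃ f : H, ‖T f‖ = 1) :
    ∃ f₀ : H, ‖T f₀‖ = 1 ∧ (∀ f : H, ‖T f‖ = 1 → F f₀ ≤ F f) ∧ 0 ≤ F f₀ ∧
      ∀ f : H, (F f₀ + 1) * ‖T f‖ ^ 2 ≤ ‖f‖ ^ 2 :=
  stmt_19_general T hTcomp hTnorm F hF hΩ
end
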